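/- arXiv:0906.1086 — 2 statements merged into one kernel-verified Lean document; each statement's English description precedes it below -/
import Mathlib

section
/- Let G be a bridgeless cubic graph and let (M1, M2, M3, M4, M5, M6) be a Fulkerson covering of G. Set T = (M1, M2, M3) and T' = (M4, M5, M6). Then T and T' are FR-triples and they are compatible; more precisely T_1 = T'_1, T_0 = T'_2 and T_2 = T'_0. -/
open SimpleGraph

variable {V : Type*}

/-- Two edges (as unordered pairs) are disjoint: they share no vertex. -/
def Sym2Disjoint {V : Type*} (e f : Sym2 V) : Prop := ∀ v : V, v ∈ e → v ∉ f

/-- A matching of `G`, given as a set of edges of `G` which are pairwise disjoint. -/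
def IsMatchingSet (G : SimpleGraph V) (M : Set (Sym2 V)) : Prop :=
  M ⊆ G.edgeSet ∧ M.Pairwise Sym2Disjoint

/-- A perfect matching of `G`: a matching covering every vertex. -/
def IsPerfectMatchingSet (G : SimpleGraph V) (M : Set (Sym2 V)) : Prop :=
  IsMatchingSet G M ∧ ∀ v : V, ∃ e ∈ M, v ∈ e

/-- A cubic (3-regular) graph. -/
def IsCubic (G : SimpleGraph V) : Prop := ∀ v : V, (G.neighborSet v).ncard = 3

/-- A bridgeless graph. -/
def Bridgeless (G : SimpleGraph V) : Prop := ∀ e : Sym2 V, ¬ G.IsBridge e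

/-- A Fulkerson covering: six perfect matchings such that every edge of `G`
lies in exactly two of them (counted with multiplicity in the list). -/
def IsFulkersonCovering (G : SimpleGraph V) (M : Fin 6 → Set (Sym2 V)) : Prop :=
  (∀ i, IsPerfectMatchingSet G (M i)) ∧
  ∀ e ∈ G.edgeSet, ({i : Fin 6 | e ∈ M i} : Set (Fin 6)).ncard = 2

/-- An FR-triple: three perfect matchings with empty intersection. -/
def IsFRTriple (G : SimpleGraph V) (M1 M2 M3 : Set (Sym2 V)) : Prop :=
  IsPerfectMatchingSet G M1 ∧ IsPerfectMatchingSet G M2 ∧ IsPerfectMatchingSet G M3 ∧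
  M1 ∩ M2 ∩ M3 = ∅

/-- `tSet G M1 M2 M3 k` is the set `T_k` of edges of `G` lying in exactly `k`
of the three matchings (counted with multiplicity). -/
def tSet (G : SimpleGraph V) (M1 M2 M3 : Set (Sym2 V)) (k : ℕ) : Set (Sym2 V) :=
  {e ∈ G.edgeSet | ({i : Fin 3 | e ∈ ![M1, M2, M3] i} : Set (Fin 3)).ncard = k}

/-- Two FR-triples are compatible when `T_0 = T'_2` and `T_2 = T'_0`. -/
def CompatibleFR (G : SimpleGraph V) (M1 M2 M3 N1 N2 N3 : Set (Sym2 V)) : Prop :=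
  tSet G M1 M2 M3 0 = tSet G N1 N2 N3 2 ∧ tSet G M1 M2 M3 2 = tSet G N1 N2 N3 0

/-!
Every edge lies in exactly two of the six matchings, so its multiplicities in `T` and in `T'`
add up to `2`. Hence no edge lies in all three matchings of a triple, and an edge has
multiplicity `k` in `T` exactly when it has multiplicity `2 - k` in `T'`.
-/

lemma Set.ncard_setOf_fin_add {m n : ℕ} (p : Fin (m + n) → Prop) :
    {i | p i}.ncard =
      {i : Fin m | p (Fin.castAdd n i)}.ncard + {i : Fin n | p (Fin.natAdd m i)}.ncard := by
  classical
  simp only [Set.ncard_eq_toFinset_card', Set.toFinset_ofPred, Finset.card_filter,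
    Fin.sum_univ_add]

noncomputable def tripleMult (M1 M2 M3 : Set (Sym2 V)) (e : Sym2 V) : ℕ :=
  ({i : Fin 3 | e ∈ ![M1, M2, M3] i} : Set (Fin 3)).ncard

section

variable {G : SimpleGraph V} {M1 M2 M3 N1 N2 N3 : Set (Sym2 V)} {e : Sym2 V}

lemma mem_tSet {k : ℕ} :
    e ∈ tSet G M1 M2 M3 k ↔ e ∈ G.edgeSet ∧ tripleMult M1 M2 M3 e = k :=
  Iff.rfl

lemma tripleMult_eq_three (h1 : e ∈ M1) (h2 : e ∈ M2) (h3 : e ∈ M3) :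
    tripleMult M1 M2 M3 e = 3 := by
  have : {i : Fin 3 | e ∈ ![M1, M2, M3] i} = Set.univ := by
    ext i
    fin_cases i <;> simp [h1, h2, h3]
  simp [tripleMult, this]

lemma inter_inter_eq_empty_of_tripleMult_le_two (hM1 : M1 ⊆ G.edgeSet)
    (h : ∀ e ∈ G.edgeSet, tripleMult M1 M2 M3 e ≤ 2) : M1 ∩ M2 ∩ M3 = ∅ := by
  refine Set.eq_empty_of_forall_notMem fun e ⟨⟨h1, h2⟩, h3⟩ => ?_
  have := h e (hM1 h1)
  rw [tripleMult_eq_three h1 h2 h3] at this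
  omega

lemma isFRTriple_of_tripleMult_le_two (hM1 : IsPerfectMatchingSet G M1)
    (hM2 : IsPerfectMatchingSet G M2) (hM3 : IsPerfectMatchingSet G M3)
    (h : ∀ e ∈ G.edgeSet, tripleMult M1 M2 M3 e ≤ 2) : IsFRTriple G M1 M2 M3 :=
  ⟨hM1, hM2, hM3, inter_inter_eq_empty_of_tripleMult_le_two hM1.1.1 h⟩

lemma tSet_eq_tSet_of_tripleMult_add_eq_two
    (h : ∀ e ∈ G.edgeSet, tripleMult M1 M2 M3 e + tripleMult N1 N2 N3 e = 2)
    {k k' : ℕ} (hk : k + k' = 2) : tSet G M1 M2 M3 k = tSet G N1 N2 N3 k' := by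
  ext e
  simp only [mem_tSet]
  constructor <;> rintro ⟨he, hm⟩ <;> exact ⟨he, by have := h e he; omega⟩

end

namespace IsFulkersonCovering

variable {G : SimpleGraph V} {M : Fin 6 → Set (Sym2 V)}

lemma tripleMult_add_tripleMult (hF : IsFulkersonCovering G M) {e : Sym2 V}
    (he : e ∈ G.edgeSet) :
    tripleMult (M 0) (M 1) (M 2) e + tripleMult (M 3) (M 4) (M 5) e = 2 := by
  rw [← hF.2 e he, Set.ncard_setOf_fin_add (m := 3) (n := 3)]
  congr 1 <;> unfold tripleMult <;> congr 1 <;> ext i <;> fin_cases i <;> rfl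

end IsFulkersonCovering

theorem stmt_3_general {V : Type*} (G : SimpleGraph V)
    (M : Fin 6 → Set (Sym2 V)) (hF : IsFulkersonCovering G M) :
    IsFRTriple G (M 0) (M 1) (M 2) ∧ IsFRTriple G (M 3) (M 4) (M 5) ∧
    CompatibleFR G (M 0) (M 1) (M 2) (M 3) (M 4) (M 5) ∧
    tSet G (M 0) (M 1) (M 2) 1 = tSet G (M 3) (M 4) (M 5) 1 ∧
    tSet G (M 0) (M 1) (M 2) 0 = tSet G (M 3) (M 4) (M 5) 2 ∧
    tSet G (M 0) (M 1) (M 2) 2 = tSet G (M 3) (M 4) (M 5) 0 := by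
  have hsum e (he : e ∈ G.edgeSet) := hF.tripleMult_add_tripleMult he
  have hT : ∀ {k k'}, k + k' = 2 → tSet G (M 0) (M 1) (M 2) k = tSet G (M 3) (M 4) (M 5) k' :=
    tSet_eq_tSet_of_tripleMult_add_eq_two hsum
  refine ⟨isFRTriple_of_tripleMult_le_two (hF.1 0) (hF.1 1) (hF.1 2) fun e he => ?_,
    isFRTriple_of_tripleMult_le_two (hF.1 3) (hF.1 4) (hF.1 5) fun e he => ?_,
    ⟨hT rfl, hT rfl⟩, hT rfl, hT rfl, hT rfl⟩ <;>
  · have := hsum e he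
    omega

/-- If `(M 0, …, M 5)` is a Fulkerson covering of a bridgeless cubic
graph `G`, then `T = (M 0, M 1, M 2)` and `T' = (M 3, M 4, M 5)` are FR-triples and they
are compatible; more precisely `T_1 = T'_1`, `T_0 = T'_2` and `T_2 = T'_0`. -/
theorem stmt_3 {V : Type*} [Fintype V] (G : SimpleGraph V)
    (hcubic : IsCubic G) (hbridgeless : Bridgeless G)
    (M : Fin 6 → Set (Sym2 V)) (hF : IsFulkersonCovering G M) :
    IsFRTriple G (M 0) (M 1) (M 2) ∧ IsFRTriple G (M 3) (M 4) (M 5) ∧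
    CompatibleFR G (M 0) (M 1) (M 2) (M 3) (M 4) (M 5) ∧
    tSet G (M 0) (M 1) (M 2) 1 = tSet G (M 3) (M 4) (M 5) 1 ∧
    tSet G (M 0) (M 1) (M 2) 0 = tSet G (M 3) (M 4) (M 5) 2 ∧
    tSet G (M 0) (M 1) (M 2) 2 = tSet G (M 3) (M 4) (M 5) 0 :=
  stmt_3_general G M hF
end

section
/- Let G be a cubic graph, M a perfect matching of G, and Γ an even cycle of G∖M. Let M_X and M_Y be perfect matchings of G such that exactly two vertices x1, x2 of Γ are incident with edges of M_X ∩ M and exactly two vertices y1, y2 of Γ are incident with edges of M_Y ∩ M, where x1, x2, y1, y2 are pairwise distinct and x1x2 and y1y2 are edges of Γ. Then either x1x2 and y1y2 are the only edges of Γ belonging to neither M_X nor M_Y, or the edges of Γ belonging to M_X ∪ M_Y form a perfect matching of Γ in which every edge belongs to both M_X and M_Y except x1x2, which belongs to M_Y and not M_X, and y1y2, which belongs to M_X and not M_Y. -/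
open SimpleGraph

variable {V : Type*}

/-- `S` is (the vertex set of) a cycle of `G∖M`: a connected component of the graph
obtained from `G` by deleting the edges of `M` (for `M` a perfect matching of a cubic
graph `G`, these components are exactly the cycles of `G∖M`). -/
def IsCycleOf (G : SimpleGraph V) (M : Set (Sym2 V)) (S : Set V) : Prop :=
  ∃ c : (G.deleteEdges M).ConnectedComponent, S = c.supp

/-- The edges of the cycle of `G∖M` with vertex set `S`: edges of `G` not in `M`
with both endpoints in `S`. -/
def cycleEdges (G : SimpleGraph V) (M : Set (Sym2 V)) (S : Set V) : Set (Sym2 V) :=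
  {e | e ∈ G.edgeSet ∧ e ∉ M ∧ ∀ v ∈ e, v ∈ S}

/-- The vertices of `S` incident with an edge of `X`. -/
def incVerts (S : Set V) (X : Set (Sym2 V)) : Set V :=
  {v | v ∈ S ∧ ∃ e ∈ X, v ∈ e}

/-- `A` is an `M`-balanced matching: `A = M ∩ M'` for some perfect matching `M'`. -/
def IsBalancedMatching (G : SimpleGraph V) (M A : Set (Sym2 V)) : Prop :=
  ∃ M' : Set (Sym2 V), IsPerfectMatchingSet G M' ∧ A = M ∩ M'

/-- `{A, B, C, D}` is an F-family for the perfect matching `M` of `G`: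
four pairwise disjoint `M`-balanced matchings such that
(i) every odd cycle of `G∖M` has, for each member, exactly one vertex incident with an
edge of that member;
(ii) every even cycle of `G∖M` incident with an edge of `A ∪ B ∪ C ∪ D` contains exactly
four vertices incident with edges of `A ∪ B ∪ C ∪ D`, and these four are incident to a
single member, or two of them are incident to one member and the other two to another
single member;
(iii) for each cycle of `G∖M` the four vertices so determined are covered by two
disjoint edges of `G` whose endpoints all lie among these four vertices. -/
def IsFFamily (G : SimpleGraph V) (M A B C D : Set (Sym2 V)) : Prop :=
  (∀ X ∈ ({A, B, C, D} : Set (Set (Sym2 V))), IsBalancedMatching G M X) ∧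
  [A, B, C, D].Pairwise Disjoint ∧
  (∀ S : Set V, IsCycleOf G M S → Odd S.ncard →
    ∀ X ∈ ({A, B, C, D} : Set (Set (Sym2 V))), (incVerts S X).ncard = 1) ∧
  (∀ S : Set V, IsCycleOf G M S → Even S.ncard →
    (incVerts S (A ∪ B ∪ C ∪ D)).Nonempty →
    (incVerts S (A ∪ B ∪ C ∪ D)).ncard = 4 ∧
    ((∃ X ∈ ({A, B, C, D} : Set (Set (Sym2 V))),
        incVerts S (A ∪ B ∪ C ∪ D) = incVerts S X) ∨
     (∃ X ∈ ({A, B, C, D} : Set (Set (Sym2 V))),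
      ∃ Y ∈ ({A, B, C, D} : Set (Set (Sym2 V))), X ≠ Y ∧
        (incVerts S X).ncard = 2 ∧ (incVerts S Y).ncard = 2 ∧
        incVerts S (A ∪ B ∪ C ∪ D) = incVerts S X ∪ incVerts S Y))) ∧
  (∀ S : Set V, IsCycleOf G M S → (incVerts S (A ∪ B ∪ C ∪ D)).Nonempty →
    ∃ e1 e2 : Sym2 V, e1 ∈ G.edgeSet ∧ e2 ∈ G.edgeSet ∧ e1 ≠ e2 ∧
      Sym2Disjoint e1 e2 ∧
      (∀ v : V, (v ∈ e1 ∨ v ∈ e2) ↔ v ∈ incVerts S (A ∪ B ∪ C ∪ D)))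

/-- `N` is a set of edges consisting, for each cycle of `G∖M` incident with the family
`{A, B, C, D}`, of exactly two disjoint edges of `G` covering the four determined
vertices of that cycle (and nothing else). -/
def IsNSet (G : SimpleGraph V) (M A B C D N : Set (Sym2 V)) : Prop :=
  (∀ e ∈ N, ∃ S : Set V, IsCycleOf G M S ∧
      (incVerts S (A ∪ B ∪ C ∪ D)).Nonempty ∧ ∀ v ∈ e, v ∈ S) ∧
  (∀ S : Set V, IsCycleOf G M S → (incVerts S (A ∪ B ∪ C ∪ D)).Nonempty →
    ∃ e1 e2 : Sym2 V, e1 ∈ G.edgeSet ∧ e2 ∈ G.edgeSet ∧ e1 ≠ e2 ∧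
      Sym2Disjoint e1 e2 ∧
      (∀ v : V, (v ∈ e1 ∨ v ∈ e2) ↔ v ∈ incVerts S (A ∪ B ∪ C ∪ D)) ∧
      {e ∈ N | ∀ v ∈ e, v ∈ S} = {e1, e2})

/-!
Completing `M_X ∩ Γ` by `x1x2` and `M_Y ∩ Γ` by `y1y2` yields two perfect matchings `P`, `Q`
of the cycle `Γ`, a connected graph in which every vertex has degree two. If `P` and `Q` agree
at a vertex `u` (share the edge covering it), they agree at each neighbour `w` of `u`: the edge
`uw` is used by neither, so both use the other edge at `w`. Hence two perfect matchings of `Γ`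
are equal as soon as they share an edge, and otherwise they are disjoint, so that together they
use every edge of `Γ`. The two cases are the two alternatives of the theorem.
-/

/-- With `E` the edges of a cycle `Γ` of `G∖M` and `S` its vertex set, this is a perfect
matching of `Γ`. -/
def IsPerfectMatchingOn (E : Set (Sym2 V)) (S : Set V) (P : Set (Sym2 V)) : Prop :=
  P ⊆ E ∧ P.Pairwise Sym2Disjoint ∧ ∀ v ∈ S, ∃ e ∈ P, v ∈ e

lemma eq_of_mem_of_pairwise_sym2Disjoint {N : Set (Sym2 V)} (hN : N.Pairwise Sym2Disjoint)
    {e f : Sym2 V} {v : V} (he : e ∈ N) (hf : f ∈ N) (hve : v ∈ e) (hvf : v ∈ f) : e = f := by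
  by_contra h
  exact hN he hf h v hve hvf

lemma sym2Disjoint_comm {e f : Sym2 V} : Sym2Disjoint e f ↔ Sym2Disjoint f e :=
  ⟨fun h v hvf hve => h v hve hvf, fun h v hve hvf => h v hvf hve⟩

lemma sym2Disjoint_mk_iff {a b : V} {e : Sym2 V} : Sym2Disjoint s(a, b) e ↔ a ∉ e ∧ b ∉ e := by
  simp [Sym2Disjoint]

lemma Set.eq_or_eq_of_ncard_eq_two {α : Type*} {s : Set α} (hs : s.ncard = 2) {a b d : α}
    (ha : a ∈ s) (hb : b ∈ s) (hd : d ∈ s) (hbd : b ≠ d) : a = b ∨ a = d := by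
  obtain ⟨x, y, -, rfl⟩ := Set.ncard_eq_two.mp hs
  simp only [Set.mem_insert_iff, Set.mem_singleton_iff] at ha hb hd
  rcases hb with rfl | rfl <;> rcases hd with rfl | rfl <;> tauto

section InsertInter

variable {α : Type*} {E X Y : Set α} {a b : α}

lemma mem_of_insert_inter_eq_insert_inter (hab : a ≠ b) (ha : a ∈ E)
    (h : insert a (E ∩ X) = insert b (E ∩ Y)) :
    a ∈ Y ∧ b ∈ X ∧ {e ∈ E | e ∈ X ∪ Y} = insert a (E ∩ X) ∧
      ∀ e ∈ E, e ∈ X ∪ Y → e ≠ a → e ≠ b → e ∈ X ∧ e ∈ Y := by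
  have hmem (e : α) : (e = a ∨ e ∈ E ∧ e ∈ X) ↔ (e = b ∨ e ∈ E ∧ e ∈ Y) := Set.ext_iff.mp h e
  have haY : a ∈ Y := (((hmem a).1 (.inl rfl)).resolve_left hab).2
  refine ⟨haY, (((hmem b).2 (.inl rfl)).resolve_left hab.symm).2, ?_, fun e he hXY hea heb => ?_⟩
  · ext e
    constructor
    · rintro ⟨he, hX | hY⟩
      exacts [.inr ⟨he, hX⟩, (hmem e).2 (.inr ⟨he, hY⟩)]
    · rintro (rfl | ⟨he, hX⟩)
      exacts [⟨ha, .inr haY⟩, ⟨he, .inl hX⟩]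
  · have := hmem e
    rcases hXY with hX | hY <;> tauto

lemma notMem_and_notMem_iff_of_disjoint (haX : a ∉ X) (hbY : b ∉ Y) (ha : a ∈ E) (hb : b ∈ E)
    (h : Disjoint (insert a (E ∩ X)) (insert b (E ∩ Y)))
    (hcover : ∀ e ∈ E, e ∈ insert a (E ∩ X) ∪ insert b (E ∩ Y)) :
    ∀ e ∈ E, (e ∉ X ∧ e ∉ Y) ↔ (e = a ∨ e = b) := by
  have haY : a ∉ Y := fun haY =>
    Set.disjoint_left.mp h (Set.mem_insert _ _) (Set.mem_insert_of_mem _ ⟨ha, haY⟩)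
  have hbX : b ∉ X := fun hbX =>
    Set.disjoint_left.mp h (Set.mem_insert_of_mem _ ⟨hb, hbX⟩) (Set.mem_insert _ _)
  refine fun e he => ⟨fun ⟨hX, hY⟩ => ?_, ?_⟩
  · have := hcover e he
    simp only [Set.mem_union, Set.mem_insert_iff, Set.mem_inter_iff] at this
    tauto
  · rintro (rfl | rfl)
    exacts [⟨haX, haY⟩, ⟨hbX, hbY⟩]

end InsertInter

namespace SimpleGraph

variable {H : SimpleGraph V}

def ConnectedComponent.edges (c : H.ConnectedComponent) : Set (Sym2 V) :=
  {e ∈ H.edgeSet | ∀ v ∈ e, v ∈ c.supp}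

lemma ConnectedComponent.edges_subset (c : H.ConnectedComponent) : c.edges ⊆ H.edgeSet :=
  fun _ he => he.1

lemma ConnectedComponent.mem_edges_of_mem {c : H.ConnectedComponent} {e : Sym2 V} {v : V}
    (he : e ∈ H.edgeSet) (hv : v ∈ c.supp) (hve : v ∈ e) : e ∈ c.edges := by
  refine ⟨he, fun w hwe => ?_⟩
  induction e using Sym2.inductionOn with
  | hf a b =>
    rw [mem_edgeSet] at he
    rcases Sym2.mem_iff.mp hve with rfl | rfl <;> rcases Sym2.mem_iff.mp hwe with rfl | rfl
    exacts [hv, c.mem_supp_of_adj_mem_supp hv he, c.mem_supp_of_adj_mem_supp hv he.symm, hv]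

end SimpleGraph

namespace IsPerfectMatchingOn

variable {E : Set (Sym2 V)} {S : Set V} {P Q : Set (Sym2 V)}

lemma mono {F : Set (Sym2 V)} (hP : IsPerfectMatchingOn E S P) (hEF : E ⊆ F) :
    IsPerfectMatchingOn F S P :=
  ⟨hP.1.trans hEF, hP.2⟩

variable {H : SimpleGraph V}

lemma exists_mem_inter_of_adj (hP : IsPerfectMatchingOn H.edgeSet S P)
    (hQ : IsPerfectMatchingOn H.edgeSet S Q) {u w : V} (hw : w ∈ S)
    (hdeg : (H.incidenceSet w).ncard = 2) (hadj : H.Adj u w) (hu : ∃ f ∈ P ∩ Q, u ∈ f) :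
    ∃ e ∈ P ∩ Q, w ∈ e := by
  obtain ⟨f, ⟨hfP, hfQ⟩, huf⟩ := hu
  by_cases hwf : w ∈ f
  · exact ⟨f, ⟨hfP, hfQ⟩, hwf⟩
  obtain ⟨p, hpP, hwp⟩ := hP.2.2 w hw
  obtain ⟨q, hqQ, hwq⟩ := hQ.2.2 w hw
  have hp : p ≠ s(u, w) := by
    rintro rfl
    exact hwf (eq_of_mem_of_pairwise_sym2Disjoint hP.2.1 hpP hfP (Sym2.mem_mk_left _ _) huf ▸ hwp)
  have hq : q ≠ s(u, w) := by
    rintro rfl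
    exact hwf (eq_of_mem_of_pairwise_sym2Disjoint hQ.2.1 hqQ hfQ (Sym2.mem_mk_left _ _) huf ▸ hwq)
  have hpq : p = q := by
    by_contra hpq
    have huw : s(u, w) ∈ H.incidenceSet w := ⟨hadj, Sym2.mem_mk_right _ _⟩
    rcases Set.eq_or_eq_of_ncard_eq_two hdeg huw ⟨hP.1 hpP, hwp⟩ ⟨hQ.1 hqQ, hwq⟩ hpq with h | h
    exacts [hp h.symm, hq h.symm]
  exact ⟨p, ⟨hpP, hpq ▸ hqQ⟩, hwp⟩

variable {c : H.ConnectedComponent}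

lemma exists_mem_inter_of_mem_supp (hP : IsPerfectMatchingOn H.edgeSet c.supp P)
    (hQ : IsPerfectMatchingOn H.edgeSet c.supp Q)
    (hdeg : ∀ v ∈ c.supp, (H.incidenceSet v).ncard = 2)
    {u v : V} (hu : u ∈ c.supp) (hv : v ∈ c.supp) (huPQ : ∃ f ∈ P ∩ Q, u ∈ f) :
    ∃ e ∈ P ∩ Q, v ∈ e := by
  obtain ⟨walk⟩ := c.reachable_of_mem_supp hu hv
  induction walk with
  | nil => exact huPQ
  | cons hadj _ ih =>
    have hw := c.mem_supp_of_adj_mem_supp hu hadj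
    exact ih hw hv (hP.exists_mem_inter_of_adj hQ hw (hdeg _ hw) hadj huPQ)

lemma subset_of_inter_nonempty (hP : IsPerfectMatchingOn c.edges c.supp P)
    (hQ : IsPerfectMatchingOn c.edges c.supp Q)
    (hdeg : ∀ v ∈ c.supp, (H.incidenceSet v).ncard = 2) (hPQ : (P ∩ Q).Nonempty) : P ⊆ Q := by
  obtain ⟨f, hfPQ⟩ := hPQ
  obtain ⟨u, huf⟩ : ∃ u, u ∈ f := ⟨_, f.out_fst_mem⟩
  intro e heP
  obtain ⟨v, hve⟩ : ∃ v, v ∈ e := ⟨_, e.out_fst_mem⟩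
  obtain ⟨g, ⟨hgP, hgQ⟩, hvg⟩ :=
    (hP.mono c.edges_subset).exists_mem_inter_of_mem_supp (hQ.mono c.edges_subset) hdeg
      ((hP.1 hfPQ.1).2 u huf) ((hP.1 heP).2 v hve) ⟨f, hfPQ, huf⟩
  exact eq_of_mem_of_pairwise_sym2Disjoint hP.2.1 heP hgP hve hvg ▸ hgQ

lemma eq_or_disjoint (hP : IsPerfectMatchingOn c.edges c.supp P)
    (hQ : IsPerfectMatchingOn c.edges c.supp Q)
    (hdeg : ∀ v ∈ c.supp, (H.incidenceSet v).ncard = 2) : P = Q ∨ Disjoint P Q := by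
  rcases (P ∩ Q).eq_empty_or_nonempty with hPQ | hPQ
  · exact .inr (Set.disjoint_iff_inter_eq_empty.mpr hPQ)
  · exact .inl ((hP.subset_of_inter_nonempty hQ hdeg hPQ).antisymm
      (hQ.subset_of_inter_nonempty hP hdeg (Set.inter_comm P Q ▸ hPQ)))

lemma mem_union_of_disjoint (hP : IsPerfectMatchingOn c.edges c.supp P)
    (hQ : IsPerfectMatchingOn c.edges c.supp Q)
    (hdeg : ∀ v ∈ c.supp, (H.incidenceSet v).ncard = 2) (hPQ : Disjoint P Q)
    {e : Sym2 V} (he : e ∈ c.edges) : e ∈ P ∪ Q := by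
  obtain ⟨v, hve⟩ : ∃ v, v ∈ e := ⟨_, e.out_fst_mem⟩
  have hv := he.2 v hve
  obtain ⟨p, hpP, hvp⟩ := hP.2.2 v hv
  obtain ⟨q, hqQ, hvq⟩ := hQ.2.2 v hv
  have hpq : p ≠ q := fun h => Set.disjoint_left.mp hPQ hpP (h ▸ hqQ)
  rcases Set.eq_or_eq_of_ncard_eq_two (hdeg v hv) ⟨he.1, hve⟩ ⟨(hP.1 hpP).1, hvp⟩
      ⟨(hQ.1 hqQ).1, hvq⟩ hpq with rfl | rfl
  exacts [.inl hpP, .inr hqQ]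

end IsPerfectMatchingOn

section CubicGraph

variable {G : SimpleGraph V} {M N : Set (Sym2 V)}

lemma ncard_incidenceSet_deleteEdges (hG : IsCubic G) (hM : IsPerfectMatchingSet G M) (v : V) :
    ((G.deleteEdges M).incidenceSet v).ncard = 2 := by
  classical
  obtain ⟨f, hfM, hvf⟩ := hM.2 v
  have hI : (G.incidenceSet v).ncard = 3 := by
    rw [← Nat.card_coe_set_eq, Nat.card_congr (G.incidenceSetEquivNeighborSet v),
      Nat.card_coe_set_eq, hG v]
  have hdel : (G.deleteEdges M).incidenceSet v = G.incidenceSet v \ {f} := by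
    ext e
    simp only [incidenceSet, edgeSet_deleteEdges, Set.mem_sdiff, Set.mem_ofPred_eq,
      Set.mem_singleton_iff]
    constructor
    · rintro ⟨⟨heG, heM⟩, hve⟩
      exact ⟨⟨heG, hve⟩, fun h => heM (h ▸ hfM)⟩
    · rintro ⟨⟨heG, hve⟩, hef⟩
      exact ⟨⟨heG, fun heM => hef (eq_of_mem_of_pairwise_sym2Disjoint hM.1.2 heM hfM hve hvf)⟩,
        hve⟩
  have hf : f ∈ G.incidenceSet v := ⟨hM.1.1 hfM, hvf⟩
  rw [hdel, Set.ncard_sdiff_singleton_of_mem hf, hI]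

lemma cycleEdges_eq_edges (c : (G.deleteEdges M).ConnectedComponent) :
    cycleEdges G M c.supp = c.edges := by
  ext e
  simp [cycleEdges, ConnectedComponent.edges, and_assoc]

lemma notMem_of_mem_edges {c : (G.deleteEdges M).ConnectedComponent} {e : Sym2 V}
    (he : e ∈ c.edges) : e ∉ M :=
  (cycleEdges_eq_edges c ▸ he : e ∈ cycleEdges G M c.supp).2.1

lemma mem_of_mem_incVerts_inter {S : Set V} (hN : N.Pairwise Sym2Disjoint) {v : V}
    (hv : v ∈ incVerts S (N ∩ M)) {e : Sym2 V} (he : e ∈ N) (hve : v ∈ e) : e ∈ M := by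
  obtain ⟨-, f, ⟨hfN, hfM⟩, hvf⟩ := hv
  exact eq_of_mem_of_pairwise_sym2Disjoint hN he hfN hve hvf ▸ hfM

lemma notMem_of_incVerts_inter_eq (hN : N.Pairwise Sym2Disjoint) {S : Set V} {x y : V}
    (hxy : incVerts S (N ∩ M) = {x, y}) (he : s(x, y) ∉ M) : s(x, y) ∉ N := fun heN =>
  he (mem_of_mem_incVerts_inter hN (hxy ▸ Set.mem_insert x {y}) heN (Sym2.mem_mk_left x y))

/-- Away from `x` and `y`, the perfect matching `N` covers the cycle by edges of the cycle. -/
lemma isPerfectMatchingOn_insert_inter (hN : IsPerfectMatchingSet G N)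
    {c : (G.deleteEdges M).ConnectedComponent} {x y : V}
    (hxy : incVerts c.supp (N ∩ M) = {x, y}) (he : s(x, y) ∈ c.edges) :
    IsPerfectMatchingOn c.edges c.supp (insert s(x, y) (c.edges ∩ N)) := by
  have hinc {v : V} : v ∈ incVerts c.supp (N ∩ M) ↔ v = x ∨ v = y := by rw [hxy]; rfl
  refine ⟨Set.insert_subset he Set.inter_subset_left, ?_, fun v hv => ?_⟩
  · refine (hN.1.2.mono Set.inter_subset_right).insert fun f ⟨hfc, hfN⟩ _ => ?_
    have hxyf {v : V} (hv : v = x ∨ v = y) : v ∉ f := fun hvf =>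
      notMem_of_mem_edges hfc (mem_of_mem_incVerts_inter hN.1.2 (hinc.2 hv) hfN hvf)
    have hdisj : Sym2Disjoint s(x, y) f := sym2Disjoint_mk_iff.mpr ⟨hxyf (.inl rfl), hxyf (.inr rfl)⟩
    exact ⟨hdisj, sym2Disjoint_comm.mp hdisj⟩
  · obtain ⟨e, heN, hve⟩ := hN.2 v
    by_cases heM : e ∈ M
    · refine ⟨s(x, y), Set.mem_insert _ _, ?_⟩
      rcases hinc.1 ⟨hv, e, ⟨heN, heM⟩, hve⟩ with rfl | rfl
      exacts [Sym2.mem_mk_left _ _, Sym2.mem_mk_right _ _]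
    · have heH : e ∈ (G.deleteEdges M).edgeSet := by
        rw [edgeSet_deleteEdges]; exact ⟨hN.1.1 heN, heM⟩
      exact ⟨e, Set.mem_insert_of_mem _ ⟨ConnectedComponent.mem_edges_of_mem heH hv hve, heN⟩, hve⟩

end CubicGraph

theorem stmt_10_general {V : Type*} (G : SimpleGraph V)
    (hcubic : IsCubic G)
    (M : Set (Sym2 V)) (hM : IsPerfectMatchingSet G M)
    (S : Set V) (hS : IsCycleOf G M S)
    (MX MY : Set (Sym2 V))
    (hMX : IsPerfectMatchingSet G MX) (hMY : IsPerfectMatchingSet G MY)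
    (x1 x2 y1 y2 : V)
    (hx : incVerts S (MX ∩ M) = {x1, x2}) (hy : incVerts S (MY ∩ M) = {y1, y2})
    (hd : [x1, x2, y1, y2].Pairwise (· ≠ ·))
    (he1 : s(x1, x2) ∈ cycleEdges G M S) (he2 : s(y1, y2) ∈ cycleEdges G M S) :
    (∀ e ∈ cycleEdges G M S,
      (e ∉ MX ∧ e ∉ MY) ↔ (e = s(x1, x2) ∨ e = s(y1, y2))) ∨
    (({e ∈ cycleEdges G M S | e ∈ MX ∪ MY}).Pairwise Sym2Disjoint ∧
     (∀ v ∈ S, ∃ e ∈ {e ∈ cycleEdges G M S | e ∈ MX ∪ MY}, v ∈ e) ∧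
     s(x1, x2) ∈ MY ∧ s(x1, x2) ∉ MX ∧ s(y1, y2) ∈ MX ∧ s(y1, y2) ∉ MY ∧
     (∀ e ∈ cycleEdges G M S, e ∈ MX ∪ MY →
        e ≠ s(x1, x2) → e ≠ s(y1, y2) → e ∈ MX ∧ e ∈ MY)) := by
  obtain ⟨c, rfl⟩ := hS
  have hxX := notMem_of_incVerts_inter_eq hMX.1.2 hx he1.2.1
  have hyY := notMem_of_incVerts_inter_eq hMY.1.2 hy he2.2.1
  have hxy : s(x1, x2) ≠ s(y1, y2) := by
    simp only [List.pairwise_cons, List.mem_cons, List.not_mem_nil] at hd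
    simp only [ne_eq, Sym2.eq_iff]
    grind
  rw [cycleEdges_eq_edges] at he1 he2 ⊢
  have hdeg := fun v (_ : v ∈ c.supp) => ncard_incidenceSet_deleteEdges hcubic hM v
  have hP := isPerfectMatchingOn_insert_inter hMX hx he1
  have hQ := isPerfectMatchingOn_insert_inter hMY hy he2
  rcases hP.eq_or_disjoint hQ hdeg with hPQ | hPQ
  · obtain ⟨hxY, hyX, hT, hboth⟩ := mem_of_insert_inter_eq_insert_inter hxy he1 hPQ
    rw [hT]
    exact .inr ⟨hP.2.1, hP.2.2, hxY, hxX, hyX, hyY, hboth⟩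
  · exact .inl (notMem_and_notMem_iff_of_disjoint hxX hyY he1 he2 hPQ
      fun e he => hP.mem_union_of_disjoint hQ hdeg hPQ he)

/-- Let `Γ` (with vertex set `S`) be an even cycle of `G∖M`, and let
`M_X`, `M_Y` be perfect matchings such that exactly the two vertices `x1, x2` of `Γ`
are incident with edges of `M_X ∩ M` and exactly the two vertices `y1, y2` with edges of
`M_Y ∩ M`, the four vertices pairwise distinct, and `x1x2`, `y1y2` edges of `Γ`. Then
either `x1x2` and `y1y2` are the only edges of `Γ` in neither `M_X` nor `M_Y`, or the
edges of `Γ` in `M_X ∪ M_Y` form a perfect matching of `Γ` in which every edge lies in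
both `M_X` and `M_Y` except `x1x2` (in `M_Y` only) and `y1y2` (in `M_X` only). -/
theorem stmt_10 {V : Type*} [Fintype V] (G : SimpleGraph V)
    (hcubic : IsCubic G)
    (M : Set (Sym2 V)) (hM : IsPerfectMatchingSet G M)
    (S : Set V) (hS : IsCycleOf G M S) (heven : Even S.ncard)
    (MX MY : Set (Sym2 V))
    (hMX : IsPerfectMatchingSet G MX) (hMY : IsPerfectMatchingSet G MY)
    (x1 x2 y1 y2 : V)
    (hx : incVerts S (MX ∩ M) = {x1, x2}) (hy : incVerts S (MY ∩ M) = {y1, y2})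
    (hd : [x1, x2, y1, y2].Pairwise (· ≠ ·))
    (he1 : s(x1, x2) ∈ cycleEdges G M S) (he2 : s(y1, y2) ∈ cycleEdges G M S) :
    (∀ e ∈ cycleEdges G M S,
      (e ∉ MX ∧ e ∉ MY) ↔ (e = s(x1, x2) ∨ e = s(y1, y2))) ∨
    (({e ∈ cycleEdges G M S | e ∈ MX ∪ MY}).Pairwise Sym2Disjoint ∧
     (∀ v ∈ S, ∃ e ∈ {e ∈ cycleEdges G M S | e ∈ MX ∪ MY}, v ∈ e) ∧
     s(x1, x2) ∈ MY ∧ s(x1, x2) ∉ MX ∧ s(y1, y2) ∈ MX ∧ s(y1, y2) ∉ MY ∧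
     (∀ e ∈ cycleEdges G M S, e ∈ MX ∪ MY →
        e ≠ s(x1, x2) → e ≠ s(y1, y2) → e ∈ MX ∧ e ∈ MY)) :=
  stmt_10_general G hcubic M hM S hS MX MY hMX hMY x1 x2 y1 y2 hx hy hd he1 he2
end
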